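/- Let G and H be maximally almost periodic Hausdorff abelian topological groups, each with the Schur property (a sequence converges in the group iff it converges in the topology induced by all continuous characters). Then the group Z = CHom_p(G, H) of continuous homomorphisms from G to H with the topology of pointwise convergence also has the Schur property. -/

import Mathlib

/-- A continuous character of an abelian topological group, as a `ℂ`-valued function. -/
def IsChar {K : Type*} [AddCommGroup K] [TopologicalSpace K] (χ : K → ℂ) : Prop :=
  Continuous χ ∧ (∀ x y, χ (x + y) = χ x * χ y) ∧ ∀ x, ‖χ x‖ = 1

/-- A group is maximally almost periodic if its continuous characters separate points. -/
def MAPGroup (K : Type*) [AddCommGroup K] [TopologicalSpace K] : Prop :=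
  ∀ g : K, g ≠ 0 → ∃ χ : K → ℂ, IsChar χ ∧ χ g ≠ 1

/-- The Schur property: a sequence converges iff it converges under every continuous
character, i.e. in the topology induced by all continuous characters. -/
def SchurProperty (K : Type*) [AddCommGroup K] [TopologicalSpace K] : Prop :=
  ∀ (u : ℕ → K) (k : K),
    Filter.Tendsto u Filter.atTop (nhds k) ↔
      ∀ χ : K → ℂ, IsChar χ → Filter.Tendsto (fun n => χ (u n)) Filter.atTop (nhds (χ k))

/-- The group of continuous homomorphisms `G → H` with the pointwise topology. -/
def CHomP (G H : Type*) [AddCommGroup G] [AddCommGroup H] [TopologicalSpace G]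
    [TopologicalSpace H] : Type _ :=
  {φ : G → H // Continuous φ ∧ ∀ x y, φ (x + y) = φ x + φ y}

section
variable (G H : Type*) [AddCommGroup G] [AddCommGroup H] [TopologicalSpace G]
  [TopologicalSpace H] [IsTopologicalAddGroup H]

instance : TopologicalSpace (CHomP G H) := instTopologicalSpaceSubtype

instance : Zero (CHomP G H) :=
  ⟨⟨fun _ => 0, continuous_const, by intro x y; simp⟩⟩

instance : Add (CHomP G H) :=
  ⟨fun φ ψ => ⟨fun x => φ.1 x + ψ.1 x, φ.2.1.add ψ.2.1, by
    intro x y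
    show φ.1 (x + y) + ψ.1 (x + y) = _
    rw [φ.2.2 x y, ψ.2.2 x y]; exact add_add_add_comm _ _ _ _⟩⟩

instance : Neg (CHomP G H) :=
  ⟨fun φ => ⟨fun x => -(φ.1 x), φ.2.1.neg, by
    intro x y
    show -(φ.1 (x + y)) = _
    rw [φ.2.2 x y]; abel⟩⟩

instance : AddCommGroup (CHomP G H) where
  add_assoc a b c := Subtype.ext (funext fun x => add_assoc _ _ _)
  zero_add a := Subtype.ext (funext fun x => zero_add _)
  add_zero a := Subtype.ext (funext fun x => add_zero _)
  neg_add_cancel a := Subtype.ext (funext fun x => neg_add_cancel _)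
  add_comm a b := Subtype.ext (funext fun x => add_comm _ _)
  nsmul := nsmulRec
  zsmul := zsmulRec

end

/-! Convergence in `CHom_p(G, H)` is pointwise convergence in `H`. For each `g : G` and each
character `Φ` of `H`, the map `ψ ↦ Φ (ψ g)` is a character of `CHom_p(G, H)`, so character-wise
convergence of `uₙ → k` gives character-wise convergence of `uₙ g → k g` in `H`, and the Schur
property of `H` upgrades this to convergence in `H`. -/

open Filter Topology

theorem IsChar.tendsto_comp {K : Type*} [AddCommGroup K] [TopologicalSpace K] {χ : K → ℂ}
    (hχ : IsChar χ) {α : Type*} {l : Filter α} {u : α → K} {k : K}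
    (hu : Tendsto u l (𝓝 k)) : Tendsto (fun n => χ (u n)) l (𝓝 (χ k)) :=
  (hχ.1.tendsto k).comp hu

theorem schurProperty_iff {K : Type*} [AddCommGroup K] [TopologicalSpace K] :
    SchurProperty K ↔ ∀ (u : ℕ → K) (k : K),
      (∀ χ : K → ℂ, IsChar χ → Tendsto (fun n => χ (u n)) atTop (𝓝 (χ k))) →
        Tendsto u atTop (𝓝 k) :=
  ⟨fun h u k => (h u k).2, fun h u k => ⟨fun hu _ hχ => hχ.tendsto_comp hu, h u k⟩⟩

namespace CHomP

variable {G H : Type*} [AddCommGroup G] [AddCommGroup H] [TopologicalSpace G]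
  [TopologicalSpace H]

theorem continuous_eval (g : G) : Continuous fun ψ : CHomP G H => ψ.1 g :=
  (continuous_apply g).comp continuous_subtype_val

theorem tendsto_nhds_iff {α : Type*} {l : Filter α} {u : α → CHomP G H} {k : CHomP G H} :
    Tendsto u l (𝓝 k) ↔ ∀ g : G, Tendsto (fun n => (u n).1 g) l (𝓝 (k.1 g)) :=
  tendsto_subtype_rng.trans tendsto_pi_nhds

variable [IsTopologicalAddGroup H]

theorem isChar_comp_eval {Φ : H → ℂ} (hΦ : IsChar Φ) (g : G) :
    IsChar fun ψ : CHomP G H => Φ (ψ.1 g) :=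
  ⟨hΦ.1.comp (continuous_eval g), fun ψ ψ' => hΦ.2.1 (ψ.1 g) (ψ'.1 g), fun _ => hΦ.2.2 _⟩

end CHomP

theorem stmt18_general {G H : Type*} [AddCommGroup G] [AddCommGroup H] [TopologicalSpace G]
    [TopologicalSpace H] [IsTopologicalAddGroup H]
    (hSH : SchurProperty H) :
    SchurProperty (CHomP G H) :=
  schurProperty_iff.2 fun _ _ hu => CHomP.tendsto_nhds_iff.2 fun g =>
    (hSH _ _).2 fun _ hΦ => hu _ (CHomP.isChar_comp_eval hΦ g)

/-- If `G` and `H` are maximally almost periodic abelian topological groups with the Schur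
property, then the group `CHom_p(G, H)` of continuous homomorphisms with the pointwise
topology also has the Schur property. -/
theorem stmt18 {G H : Type*} [AddCommGroup G] [AddCommGroup H] [TopologicalSpace G]
    [TopologicalSpace H] [IsTopologicalAddGroup G] [IsTopologicalAddGroup H]
    (hG : MAPGroup G) (hH : MAPGroup H)
    (hSG : SchurProperty G) (hSH : SchurProperty H) :
    SchurProperty (CHomP G H) :=
  stmt18_general hSH
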